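/- Let F : 𝔻 → M_n(ℂ) be holomorphic with r(F(ζ)) < 1 for all ζ ∈ 𝔻, and suppose F(0) is nilpotent of order d. Then for every ζ ∈ 𝔻 and every eigenvalue μ of F(ζ), |μ|^d ≤ |ζ|; equivalently r(F(ζ)) ≤ |ζ|^{1/d}. -/

import Mathlib

/-!
Put `H = F ^ d`, so that `H 0 = 0` and the eigenvalues of `H ζ` lie in the closed unit disc; it
suffices to bound them by `‖ζ‖`. Write `H ζ = ζ • B ζ` with `B` holomorphic (entrywise difference
quotients at `0`). On the circle `‖ζ‖ = r` the eigenvalues of `B ζ` are at most `r⁻¹`, a maximum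
principle for eigenvalues carries this bound into the disc, and `r → 1` gives `‖μ‖ ≤ ‖ζ‖`.

The maximum principle stands in for the subharmonicity of the spectral radius. If the eigenvalues
are at most `R` on the boundary, the coefficients of the characteristic polynomial, which are
holomorphic, are bounded accordingly there and hence inside, and a root of a monic polynomial with
such coefficients is at most `2 ^ n * R`. Applied to `B ^ m` this gives `‖ν‖ ^ m ≤ 2 ^ n * R ^ m`,
and the factor `2 ^ n` disappears as `m → ∞`.
-/

open Complex Metric

/-- The spectral radius of an n×n complex matrix. -/
noncomputable def specRad {n : ℕ} (A : Matrix (Fin n) (Fin n) ℂ) : ℝ :=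
  sSup ((fun z : ℂ => ‖z‖) '' spectrum ℂ A)

theorem norm_le_specRad {n : ℕ} {A : Matrix (Fin n) (Fin n) ℂ} {μ : ℂ} (hμ : μ ∈ spectrum ℂ A) :
    ‖μ‖ ≤ specRad A :=
  le_csSup ((Matrix.finite_spectrum A).image _).bddAbove ⟨μ, hμ, rfl⟩

open Polynomial Filter Topology

theorem le_of_forall_pow_succ_le_mul_pow {a b C : ℝ} (hb : 0 ≤ b)
    (h : ∀ m : ℕ, a ^ (m + 1) ≤ C * b ^ (m + 1)) : a ≤ b := by
  obtain rfl | hb := hb.eq_or_lt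
  · simpa using h 0
  by_contra! hba
  have hab : 1 < a / b := (one_lt_div hb).2 hba
  obtain ⟨m, hm⟩ := pow_unbounded_of_one_lt C hab
  have : (a / b) ^ (m + 1) ≤ C := by
    rw [div_pow, div_le_iff₀ (by positivity)]
    exact h m
  exact (hm.trans_le ((pow_le_pow_right₀ hab.le m.le_succ).trans this)).false

theorem Polynomial.Monic.norm_le_of_isRoot {K : Type*} [NormedField K] {p : K[X]} (hp : p.Monic)
    {R : ℝ} (hR : 0 ≤ R)
    (hcoeff : ∀ i < p.natDegree, ‖p.coeff i‖ ≤ R ^ (p.natDegree - i) * p.natDegree.choose i)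
    {τ : K} (hτ : p.IsRoot τ) : ‖τ‖ ≤ 2 ^ p.natDegree * R := by
  set N := p.natDegree
  obtain hτR | hRτ := le_or_gt ‖τ‖ R
  · exact hτR.trans (le_mul_of_one_le_left hR (one_le_pow₀ one_le_two))
  have hN : N ≠ 0 := fun hN => by
    simp [hp.natDegree_eq_zero.1 hN] at hτ
  have hτN : τ ^ N = -∑ i ∈ Finset.range N, p.coeff i * τ ^ i := by
    have := hτ.eq_zero
    rw [eval_eq_sum_range, Finset.sum_range_succ, hp.coeff_natDegree, one_mul] at this
    exact eq_neg_of_add_eq_zero_right this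
  have hterm : ∀ i ∈ Finset.range N,
      ‖p.coeff i * τ ^ i‖ ≤ N.choose i * (R * ‖τ‖ ^ (N - 1)) := by
    intro i hi
    have hi : i < N := Finset.mem_range.1 hi
    calc ‖p.coeff i * τ ^ i‖ ≤ R ^ (N - i) * N.choose i * ‖τ‖ ^ i := by
          rw [norm_mul, norm_pow]; gcongr; exact hcoeff i hi
      _ = N.choose i * (R * (R ^ (N - 1 - i) * ‖τ‖ ^ i)) := by
          rw [show N - i = N - 1 - i + 1 by omega, pow_succ]; ring
      _ ≤ N.choose i * (R * (‖τ‖ ^ (N - 1 - i) * ‖τ‖ ^ i)) := by gcongr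
      _ = N.choose i * (R * ‖τ‖ ^ (N - 1)) := by
          rw [← pow_add, Nat.sub_add_cancel (by omega)]
  have hchoose : ∑ i ∈ Finset.range N, (N.choose i : ℝ) ≤ 2 ^ N := by
    have := Nat.sum_range_choose N
    rw [Finset.sum_range_succ] at this
    exact_mod_cast this ▸ Nat.le_add_right _ _
  have hbound : ‖τ‖ * ‖τ‖ ^ (N - 1) ≤ 2 ^ N * R * ‖τ‖ ^ (N - 1) :=
    calc ‖τ‖ * ‖τ‖ ^ (N - 1) = ‖τ ^ N‖ := by
          rw [norm_pow, ← pow_succ', Nat.sub_add_cancel (Nat.one_le_iff_ne_zero.2 hN)]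
      _ ≤ ∑ i ∈ Finset.range N, ‖p.coeff i * τ ^ i‖ := by
          rw [hτN, norm_neg]; exact norm_sum_le _ _
      _ ≤ ∑ i ∈ Finset.range N, N.choose i * (R * ‖τ‖ ^ (N - 1)) := Finset.sum_le_sum hterm
      _ ≤ 2 ^ N * R * ‖τ‖ ^ (N - 1) := by
          rw [← Finset.sum_mul, mul_assoc]; gcongr
  exact le_of_mul_le_mul_right hbound (pow_pos (hR.trans_lt hRτ) _)

theorem spectrum.mul_mem_smul_iff {𝕜 A : Type*} [Field 𝕜] [Ring A] [Algebra 𝕜 A] {a : A}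
    {c s : 𝕜} (hc : c ≠ 0) : c * s ∈ spectrum 𝕜 (c • a) ↔ s ∈ spectrum 𝕜 a :=
  spectrum.smul_mem_smul_iff (r := Units.mk0 c hc)

theorem spectrum.norm_le_pow_of_mem_pow {𝕜 A : Type*} [NormedField 𝕜] [IsAlgClosed 𝕜] [Ring A]
    [Algebra 𝕜 A] {a : A} {R : ℝ} (h : ∀ μ ∈ spectrum 𝕜 a, ‖μ‖ ≤ R) {m : ℕ} (hm : 0 < m)
    {ν : 𝕜} (hν : ν ∈ spectrum 𝕜 (a ^ m)) : ‖ν‖ ≤ R ^ m := by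
  rw [spectrum.map_pow_of_pos a hm] at hν
  obtain ⟨μ, hμ, rfl⟩ := hν
  rw [norm_pow]
  exact pow_le_pow_left₀ (norm_nonneg μ) (h μ hμ) m

namespace Matrix
variable {ι : Type*} [Fintype ι] [DecidableEq ι]

theorem norm_charpoly_coeff_le {M : Matrix ι ι ℂ} {r : ℝ}
    (h : ∀ μ ∈ spectrum ℂ M, ‖μ‖ ≤ r) (i : ℕ) :
    ‖M.charpoly.coeff i‖ ≤ r ^ (Fintype.card ι - i) * (Fintype.card ι).choose i := by
  simpa using coeff_le_of_roots_le (f := RingHom.id ℂ) i M.charpoly_monic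
    (IsAlgClosed.splits _) fun z hz => h z <|
      mem_spectrum_iff_isRoot_charpoly.2 (isRoot_of_mem_roots (by simpa using hz))

theorem norm_le_of_mem_spectrum_of_norm_charpoly_coeff_le {M : Matrix ι ι ℂ} {R : ℝ} (hR : 0 ≤ R)
    (hcoeff : ∀ i < Fintype.card ι,
      ‖M.charpoly.coeff i‖ ≤ R ^ (Fintype.card ι - i) * (Fintype.card ι).choose i)
    {ν : ℂ} (hν : ν ∈ spectrum ℂ M) : ‖ν‖ ≤ 2 ^ Fintype.card ι * R := by
  rw [← M.charpoly_natDegree_eq_dim] at hcoeff ⊢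
  exact Monic.norm_le_of_isRoot M.charpoly_monic hR hcoeff (mem_spectrum_iff_isRoot_charpoly.1 hν)

section Analytic

variable {𝕜 E : Type*} [NontriviallyNormedField 𝕜] [NormedAddCommGroup E] [NormedSpace 𝕜 E]
  {B : E → Matrix ι ι 𝕜} {s : Set E}

theorem analyticOnNhd_pow_apply (hB : ∀ i j, AnalyticOnNhd 𝕜 (fun z => B z i j) s) (m : ℕ)
    (i j : ι) : AnalyticOnNhd 𝕜 (fun z => (B z ^ m) i j) s := by
  have hpoly : ∀ z, (B z ^ m) i j
      = MvPolynomial.aeval (fun p : ι × ι => B z p.1 p.2) ((mvPolynomialX ι ι ℤ ^ m) i j) := by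
    intro z
    conv_lhs => rw [← mvPolynomialX_mapMatrix_aeval ℤ (B z), ← map_pow]
    rfl
  simp_rw [hpoly]
  exact AnalyticOnNhd.aeval_mvPolynomial (f := fun z (p : ι × ι) => B z p.1 p.2)
    (fun p => hB p.1 p.2) _

theorem analyticOnNhd_charpoly_coeff (hB : ∀ i j, AnalyticOnNhd 𝕜 (fun z => B z i j) s) (k : ℕ) :
    AnalyticOnNhd 𝕜 (fun z => (B z).charpoly.coeff k) s := by
  have hpoly : ∀ z, (B z).charpoly.coeff k
      = MvPolynomial.aeval (fun p : ι × ι => B z p.1 p.2) ((charpoly.univ ℤ ι).coeff k) := by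
    intro z
    rw [MvPolynomial.aeval_def, ← MvPolynomial.coe_eval₂Hom, charpoly.univ_coeff_eval₂Hom]
    rfl
  simp_rw [hpoly]
  exact AnalyticOnNhd.aeval_mvPolynomial (f := fun z (p : ι × ι) => B z p.1 p.2)
    (fun p => hB p.1 p.2) _

end Analytic

theorem norm_le_two_pow_mul_of_mem_spectrum_of_frontier {U : Set ℂ} (hU : Bornology.IsBounded U)
    {B : ℂ → Matrix ι ι ℂ} (hB : ∀ i j, AnalyticOnNhd ℂ (fun z => B z i j) (closure U))
    {R : ℝ} (hR : 0 ≤ R) (hfr : ∀ z ∈ frontier U, ∀ ν ∈ spectrum ℂ (B z), ‖ν‖ ≤ R)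
    {z : ℂ} (hz : z ∈ closure U) {ν : ℂ} (hν : ν ∈ spectrum ℂ (B z)) :
    ‖ν‖ ≤ 2 ^ Fintype.card ι * R :=
  norm_le_of_mem_spectrum_of_norm_charpoly_coeff_le hR (fun i _ =>
    Complex.norm_le_of_forall_mem_frontier_norm_le hU
      (analyticOnNhd_charpoly_coeff hB i).differentiableOn.diffContOnCl
      (fun w hw => norm_charpoly_coeff_le (hfr w hw) i) hz) hν

theorem norm_le_of_mem_spectrum_of_frontier {U : Set ℂ} (hU : Bornology.IsBounded U)
    {B : ℂ → Matrix ι ι ℂ} (hB : ∀ i j, AnalyticOnNhd ℂ (fun z => B z i j) (closure U))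
    {R : ℝ} (hR : 0 ≤ R) (hfr : ∀ z ∈ frontier U, ∀ ν ∈ spectrum ℂ (B z), ‖ν‖ ≤ R)
    {z : ℂ} (hz : z ∈ closure U) {ν : ℂ} (hν : ν ∈ spectrum ℂ (B z)) : ‖ν‖ ≤ R := by
  refine le_of_forall_pow_succ_le_mul_pow (C := 2 ^ Fintype.card ι) hR fun m => ?_
  rw [← norm_pow]
  refine norm_le_two_pow_mul_of_mem_spectrum_of_frontier hU (analyticOnNhd_pow_apply hB (m + 1))
    (pow_nonneg hR _) (fun w hw _ => spectrum.norm_le_pow_of_mem_pow (hfr w hw) m.succ_pos) hz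
    (spectrum.pow_mem_pow _ _ hν)

theorem norm_le_one_of_mem_spectrum_of_smul {B : ℂ → Matrix ι ι ℂ}
    (hB : ∀ i j, AnalyticOnNhd ℂ (fun z => B z i j) (ball 0 1))
    (hsp : ∀ z ∈ ball (0 : ℂ) 1, ∀ μ ∈ spectrum ℂ (z • B z), ‖μ‖ ≤ 1)
    {z : ℂ} (hz : z ∈ ball (0 : ℂ) 1) {ν : ℂ} (hν : ν ∈ spectrum ℂ (B z)) : ‖ν‖ ≤ 1 := by
  have hsphere : ∀ r ∈ Set.Ioo ‖z‖ 1, ‖ν‖ ≤ r⁻¹ := by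
    rintro r ⟨hzr, hr1⟩
    have hr0 : 0 < r := (norm_nonneg z).trans_lt hzr
    refine norm_le_of_mem_spectrum_of_frontier isBounded_ball ?_ (inv_nonneg.2 hr0.le) ?_
      (by rw [closure_ball _ hr0.ne']; exact mem_closedBall_zero_iff.2 hzr.le) hν
    · rw [closure_ball _ hr0.ne']
      exact fun i j => (hB i j).mono (closedBall_subset_ball hr1)
    · rw [frontier_ball _ hr0.ne']
      intro w hw ν' hν'
      have hw' : ‖w‖ = r := mem_sphere_zero_iff_norm.1 hw
      have hw0 : w ≠ 0 := norm_ne_zero_iff.1 (hw' ▸ hr0.ne')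
      have := hsp w (mem_ball_zero_iff.2 (hw' ▸ hr1)) _ ((spectrum.mul_mem_smul_iff hw0).2 hν')
      rw [norm_mul, hw'] at this
      simpa using (le_inv_mul_iff₀ hr0).2 this
  have hlim : Tendsto (fun r : ℝ => r⁻¹) (𝓝[<] 1) (𝓝 1) := by
    simpa using ((continuousAt_inv₀ (one_ne_zero (α := ℝ))).tendsto).mono_left
      (nhdsWithin_le_nhds (s := Set.Iio 1))
  exact ge_of_tendsto hlim (eventually_of_mem (Ioo_mem_nhdsLT (mem_ball_zero_iff.1 hz)) hsphere)

theorem norm_le_norm_of_mem_spectrum_of_map_zero {H : ℂ → Matrix ι ι ℂ}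
    (hH : ∀ i j, DifferentiableOn ℂ (fun z => H z i j) (ball 0 1)) (h0 : H 0 = 0)
    (hsp : ∀ z ∈ ball (0 : ℂ) 1, ∀ μ ∈ spectrum ℂ (H z), ‖μ‖ ≤ 1)
    {z : ℂ} (hz : z ∈ ball (0 : ℂ) 1) {μ : ℂ} (hμ : μ ∈ spectrum ℂ (H z)) : ‖μ‖ ≤ ‖z‖ := by
  obtain rfl | hz0 := eq_or_ne z 0
  · rcases subsingleton_or_nontrivial (Matrix ι ι ℂ) with _ | _
    · simp [spectrum.of_subsingleton] at hμ
    · simp_all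
  set B : ℂ → Matrix ι ι ℂ := fun w => of fun i j => dslope (fun w => H w i j) 0 w
  have hHB : ∀ w, H w = w • B w := fun w => by
    ext i j
    simpa [B, h0] using (sub_smul_dslope (fun w => H w i j) 0 w).symm
  have hB : ∀ i j, AnalyticOnNhd ℂ (fun w => B w i j) (ball 0 1) := fun i j =>
    ((differentiableOn_dslope (ball_mem_nhds 0 one_pos)).2 (hH i j)).analyticOnNhd isOpen_ball
  simp_rw [hHB] at hsp hμ
  obtain ⟨ν, rfl⟩ : ∃ ν, μ = z * ν := ⟨z⁻¹ * μ, by field_simp⟩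
  rw [norm_mul]
  exact mul_le_of_le_one_right (norm_nonneg z)
    (norm_le_one_of_mem_spectrum_of_smul hB hsp hz ((spectrum.mul_mem_smul_iff hz0).1 hμ))

end Matrix

/-- Schwarz lemma at a nilpotent base point: if F : 𝔻 → Ω_n is holomorphic and F(0) is
nilpotent of order d, then |μ|^d ≤ |ζ| for every eigenvalue μ of F(ζ); equivalently,
r(F(ζ)) ≤ |ζ|^{1/d}. -/
theorem schwarz_nilpotent_base {n : ℕ} (F : ℂ → Matrix (Fin n) (Fin n) ℂ)
    (hol : ∀ i j, DifferentiableOn ℂ (fun ζ => F ζ i j) (Metric.ball (0 : ℂ) 1))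
    (hrange : ∀ ζ ∈ Metric.ball (0 : ℂ) 1, specRad (F ζ) < 1)
    (d : ℕ) (hd : F 0 ^ d = 0) (hd' : F 0 ^ (d - 1) ≠ 0) :
    ∀ ζ ∈ Metric.ball (0 : ℂ) 1,
      (∀ μ ∈ spectrum ℂ (F ζ), ‖μ‖ ^ d ≤ ‖ζ‖) ∧
      specRad (F ζ) ≤ ‖ζ‖ ^ ((1 : ℝ) / d) := by
  have hd0 : 0 < d := Nat.pos_of_ne_zero fun h => hd' (by simpa [h] using hd)
  have hspec : ∀ ζ ∈ ball (0 : ℂ) 1, ∀ μ ∈ spectrum ℂ (F ζ), ‖μ‖ ≤ 1 := fun ζ hζ _ hμ =>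
    (norm_le_specRad hμ).trans (hrange ζ hζ).le
  have hpow : ∀ ζ ∈ ball (0 : ℂ) 1, ∀ μ ∈ spectrum ℂ (F ζ), ‖μ‖ ^ d ≤ ‖ζ‖ := by
    intro ζ hζ μ hμ
    rw [← norm_pow]
    refine Matrix.norm_le_norm_of_mem_spectrum_of_map_zero (H := fun ζ => F ζ ^ d)
      (fun i j => (Matrix.analyticOnNhd_pow_apply
        (fun i j => (hol i j).analyticOnNhd isOpen_ball) d i j).differentiableOn)
      hd (fun w hw _ hν => by simpa using spectrum.norm_le_pow_of_mem_pow (hspec w hw) hd0 hν)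
      hζ (spectrum.pow_mem_pow _ _ hμ)
  intro ζ hζ
  refine ⟨hpow ζ hζ, Real.sSup_le ?_ (by positivity)⟩
  rintro _ ⟨μ, hμ, rfl⟩
  rw [one_div, Real.le_rpow_inv_iff_of_pos (norm_nonneg _) (norm_nonneg _) (by positivity),
    Real.rpow_natCast]
  exact hpow ζ hζ μ hμ
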